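/- If Q is a Besant quadrilateral (cyclic, not a parallelogram), then the Besant ellipse for Q is unique: any two non-circular ellipses inscribed in Q each having one focus at EP must coincide. -/

import Mathlib

open Set

noncomputable section

/-- Points of the ellipse with foci `f₁`, `f₂` and major-axis length `2*a`. -/
def EllipseSet (f₁ f₂ : ℂ) (a : ℝ) : Set ℂ := {z : ℂ | dist z f₁ + dist z f₂ = 2 * a}

/-- `E` is the (possibly circular) ellipse with foci `f₁, f₂` and semi-major axis `a`.
It is a circle precisely when `f₁ = f₂`. -/
def IsEllipse (E : Set ℂ) (f₁ f₂ : ℂ) (a : ℝ) : Prop :=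
  dist f₁ f₂ < 2 * a ∧ E = EllipseSet f₁ f₂ a

/-- The full line through `P` and `Q`. -/
def LineThrough (P Q : ℂ) : Set ℂ := {z : ℂ | ∃ θ : ℝ, z = P + θ • (Q - P)}

/-- `E` is tangent to the side `[P,Q]` at `ζ`: the line through `P` and `Q` meets `E`
in the single point `ζ`, which lies on the closed segment `[P,Q]`. -/
def TangentToSideAt (E : Set ℂ) (P Q ζ : ℂ) : Prop :=
  ζ ∈ segment ℝ P Q ∧ E ∩ LineThrough P Q = {ζ}

/-- `E` is tangent to the side `[P,Q]`. -/
def TangentToSide (E : Set ℂ) (P Q : ℂ) : Prop := ∃ ζ, TangentToSideAt E P Q ζ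

/-- A curve `E` is inscribed in the quadrilateral `A₁A₂A₃A₄` (vertices in order)
if it is tangent to each of the four sides. -/
def InscribedInQuad (E : Set ℂ) (A₁ A₂ A₃ A₄ : ℂ) : Prop :=
  TangentToSide E A₁ A₂ ∧ TangentToSide E A₂ A₃ ∧
    TangentToSide E A₃ A₄ ∧ TangentToSide E A₄ A₁

/-- `A₁A₂A₃A₄` is a convex quadrilateral with the vertices listed in cyclic order:
the four points are in convex position and the diagonals `A₁A₃`, `A₂A₄` meet. -/
def IsConvexQuad (A₁ A₂ A₃ A₄ : ℂ) : Prop :=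
  A₁ ∉ convexHull ℝ ({A₂, A₃, A₄} : Set ℂ) ∧
  A₂ ∉ convexHull ℝ ({A₁, A₃, A₄} : Set ℂ) ∧
  A₃ ∉ convexHull ℝ ({A₁, A₂, A₄} : Set ℂ) ∧
  A₄ ∉ convexHull ℝ ({A₁, A₂, A₃} : Set ℂ) ∧
  (segment ℝ A₁ A₃ ∩ segment ℝ A₂ A₄).Nonempty

def IsParallelogram (A₁ A₂ A₃ A₄ : ℂ) : Prop := A₁ + A₃ = A₂ + A₄

/-- The diagonals `A₁A₃` and `A₂A₄` are perpendicular. -/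
def Orthodiagonal (A₁ A₂ A₃ A₄ : ℂ) : Prop :=
  (A₃ - A₁).re * (A₄ - A₂).re + (A₃ - A₁).im * (A₄ - A₂).im = 0

/-- `P` is equidistant from the four points (the circumcenter, when they are concyclic). -/
def IsCircCenter (P A₁ A₂ A₃ A₄ : ℂ) : Prop :=
  dist P A₁ = dist P A₂ ∧ dist P A₂ = dist P A₃ ∧ dist P A₃ = dist P A₄

/-- `P` is the intersection point of the diagonals `A₁A₃` and `A₂A₄`. -/
def IsDiagPoint (P A₁ A₂ A₃ A₄ : ℂ) : Prop :=
  P ∈ segment ℝ A₁ A₃ ∧ P ∈ segment ℝ A₂ A₄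

/-- The plane vectors `z` and `w` are parallel. -/
def Para (z w : ℂ) : Prop := z.re * w.im = z.im * w.re

/-- The quadrilateral `A₁A₂A₃A₄` has (at least) one pair of parallel opposite sides. -/
def IsTrapezoid (A₁ A₂ A₃ A₄ : ℂ) : Prop :=
  Para (A₂ - A₁) (A₄ - A₃) ∨ Para (A₃ - A₂) (A₁ - A₄)

/-!
Let `F` be the second focus and `2a` the major axis of an inscribed ellipse with a focus at `EP`.
Since `EP` lies on the perpendicular bisector of every side `AᵢAⱼ`, its mirror image in that side
is `Aᵢ + Aⱼ - EP`, and by the reflection property of tangent lines this point lies at distance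
`2a` from `F`. Three consecutive sides give three such points; consecutive differences of them
are the diagonals `A₃ - A₁` and `A₄ - A₂` of `Q`, which are not parallel. So `F` is the
circumcenter and `2a` the circumradius of a nondegenerate triangle determined by `Q` alone.
-/

open Filter ComplexConjugate Module

section Plane

variable {V : Type*} [NormedAddCommGroup V] [InnerProductSpace ℝ V]

theorem eq_zero_of_inner_eq_zero_of_linearIndependent (hV : finrank ℝ V = 2) {u w v : V}
    (huw : LinearIndependent ℝ ![u, w]) (hu : inner ℝ v u = 0) (hw : inner ℝ v w = 0) :
    v = 0 := by
  have hspan := huw.span_eq_top_of_card_eq_finrank (by simp [hV])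
  have hortho : Submodule.span ℝ {v} ⟂ Submodule.span ℝ (range ![u, w]) := by
    rw [Submodule.isOrtho_span]
    rintro _ rfl _ ⟨i, rfl⟩
    fin_cases i <;> assumption
  rwa [hspan, Submodule.isOrtho_top_right, Submodule.span_singleton_eq_bot] at hortho

theorem eq_of_dist_eq_of_linearIndependent (hV : finrank ℝ V = 2) {X₁ X₂ X₃ c₁ c₂ : V}
    {r₁ r₂ : ℝ} (hX : LinearIndependent ℝ ![X₂ - X₁, X₃ - X₂])
    (h₁ : dist X₁ c₁ = r₁) (h₂ : dist X₂ c₁ = r₁) (h₃ : dist X₃ c₁ = r₁)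
    (h₁' : dist X₁ c₂ = r₂) (h₂' : dist X₂ c₂ = r₂) (h₃' : dist X₃ c₂ = r₂) : c₁ = c₂ := by
  have h₁₂ := EuclideanGeometry.inner_vsub_vsub_of_dist_eq_of_dist_eq (h₁.trans h₂.symm)
    (h₁'.trans h₂'.symm)
  have h₂₃ := EuclideanGeometry.inner_vsub_vsub_of_dist_eq_of_dist_eq (h₂.trans h₃.symm)
    (h₂'.trans h₃'.symm)
  exact (sub_eq_zero.1 (eq_zero_of_inner_eq_zero_of_linearIndependent hV hX h₁₂ h₂₃)).symm

end Plane

theorem linearIndependent_diagonals_of_not_collinear {V : Type*} [AddCommGroup V] [Module ℝ V]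
    {A₁ A₂ A₃ A₄ : V} (hcol : ¬ Collinear ℝ {A₁, A₂, A₃})
    (hX : (segment ℝ A₁ A₃ ∩ segment ℝ A₂ A₄).Nonempty) :
    LinearIndependent ℝ ![A₃ - A₁, A₄ - A₂] := by
  have h₁₃ : A₃ - A₁ ≠ 0 := by
    intro h
    rw [sub_eq_zero.1 h, Set.pair_comm, Set.insert_eq_of_mem (by simp)] at hcol
    exact hcol (collinear_pair ℝ _ _)
  rw [LinearIndependent.pair_iff' h₁₃]
  rintro r hr
  obtain ⟨X, hX₁, hX₂⟩ := hX
  rw [segment_eq_image'] at hX₁ hX₂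
  obtain ⟨s, -, rfl⟩ := hX₁
  obtain ⟨t, -, hst : A₂ + t • (A₄ - A₂) = A₁ + s • (A₃ - A₁)⟩ := hX₂
  rw [← hr] at hst
  have hA₂ : A₂ = AffineMap.lineMap A₁ A₃ (s - t * r) := by
    rw [AffineMap.lineMap_apply_module']
    linear_combination (norm := module) hst
  apply hcol
  rw [Set.insert_comm, hA₂]
  exact collinear_insert_of_mem_affineSpan_pair (AffineMap.lineMap_mem_affineSpan_pair _ _ _)

theorem tendsto_dist_add_dist_add_smul {E : Type*} [NormedAddCommGroup E] [NormedSpace ℝ E]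
    {v : E} (hv : v ≠ 0) (P p q : E) :
    Tendsto (fun θ : ℝ => dist (P + θ • v) p + dist (P + θ • v) q) (cocompact ℝ) atTop := by
  have hgrow : Tendsto (fun θ : ℝ => ‖θ‖ * ‖v‖ - dist P p) (cocompact ℝ) atTop :=
    tendsto_atTop_add_const_right _ _
      (tendsto_norm_cocompact_atTop.atTop_mul_const (norm_pos_iff.2 hv))
  refine tendsto_atTop_mono (fun θ => ?_) hgrow
  have h := dist_triangle (P + θ • v) p P
  rw [dist_eq_norm (P + θ • v) P, add_sub_cancel_left, norm_smul, dist_comm p P] at h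
  linarith [dist_nonneg (x := P + θ • v) (y := q)]

/-- Signed height of `z` over the line `PQ`, in units of `‖Q - P‖`. -/
def lineHeight (P Q z : ℂ) : ℝ := ((z - P) / (Q - P)).im

theorem continuous_lineHeight (P Q : ℂ) : Continuous (lineHeight P Q) := by
  unfold lineHeight
  fun_prop

theorem mem_lineThrough_iff {P Q z : ℂ} (hPQ : P ≠ Q) :
    z ∈ LineThrough P Q ↔ lineHeight P Q z = 0 := by
  have hQP : Q - P ≠ 0 := sub_ne_zero.2 hPQ.symm
  constructor
  · rintro ⟨θ, rfl⟩
    simp [lineHeight, Complex.real_smul, mul_div_assoc, div_self hQP]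
  · intro h
    refine ⟨((z - P) / (Q - P)).re, ?_⟩
    have hre : ((((z - P) / (Q - P)).re : ℝ) : ℂ) = (z - P) / (Q - P) :=
      Complex.ext (by simp) (by simpa [lineHeight] using h.symm)
    rw [Complex.real_smul, hre, div_mul_cancel₀ _ hQP]
    ring

theorem exists_mem_segment_mem_lineThrough {P Q x y : ℂ} (hPQ : P ≠ Q)
    (h : lineHeight P Q x * lineHeight P Q y ≤ 0) :
    ∃ w ∈ segment ℝ x y, w ∈ LineThrough P Q := by
  have hseg := (convex_segment x y).isPreconnected
  have hcont := (continuous_lineHeight P Q).continuousOn (s := segment ℝ x y)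
  have hx := left_mem_segment ℝ x y
  have hy := right_mem_segment ℝ x y
  obtain ⟨w, hw, h0⟩ : 0 ∈ lineHeight P Q '' segment ℝ x y := by
    rcases mul_nonpos_iff.1 h with ⟨h₁, h₂⟩ | ⟨h₁, h₂⟩
    · exact hseg.intermediate_value hy hx hcont ⟨h₂, h₁⟩
    · exact hseg.intermediate_value hx hy hcont ⟨h₁, h₂⟩
  exact ⟨w, hw, (mem_lineThrough_iff hPQ).2 h0⟩

def reflectLine (P Q z : ℂ) : ℂ := P + conj ((z - P) / (Q - P)) * (Q - P)

theorem lineHeight_reflectLine {P Q : ℂ} (hPQ : P ≠ Q) (z : ℂ) :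
    lineHeight P Q (reflectLine P Q z) = -lineHeight P Q z := by
  simp only [lineHeight, reflectLine, add_sub_cancel_left, mul_div_assoc,
    div_self (sub_ne_zero.2 hPQ.symm), mul_one, Complex.conj_im]

theorem dist_reflectLine_of_mem {P Q w : ℂ} (hPQ : P ≠ Q) (hw : w ∈ LineThrough P Q) (z : ℂ) :
    dist w (reflectLine P Q z) = dist w z := by
  obtain ⟨θ, rfl⟩ := hw
  set u := (z - P) / (Q - P)
  have hz : z = P + u * (Q - P) := by
    rw [div_mul_cancel₀ _ (sub_ne_zero.2 hPQ.symm)]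
    ring
  have h₁ : P + θ • (Q - P) - reflectLine P Q z = conj ((θ : ℂ) - u) * (Q - P) := by
    simp only [reflectLine, map_sub, Complex.conj_ofReal, Complex.real_smul]
    ring
  have h₂ : P + θ • (Q - P) - z = ((θ : ℂ) - u) * (Q - P) := by
    rw [Complex.real_smul, hz]
    ring
  rw [dist_eq_norm, dist_eq_norm, h₁, h₂, norm_mul, norm_mul, Complex.norm_conj]

theorem reflectLine_eq_of_dist_eq {P Q c : ℂ} (hPQ : P ≠ Q) (hc : dist c P = dist c Q) :
    reflectLine P Q c = P + Q - c := by
  have hQP : Q - P ≠ 0 := sub_ne_zero.2 hPQ.symm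
  set u := (c - P) / (Q - P)
  have hcP : c - P = u * (Q - P) := (div_mul_cancel₀ _ hQP).symm
  have hnorm : ‖u‖ = ‖u - 1‖ := by
    have hcQ : c - Q = (u - 1) * (Q - P) := by linear_combination hcP
    rw [dist_eq_norm, dist_eq_norm, hcP, hcQ, norm_mul, norm_mul] at hc
    exact mul_right_cancel₀ (norm_ne_zero_iff.2 hQP) hc
  have hre : u.re = 1 / 2 := by
    have h := congrArg (· ^ 2) hnorm
    simp only [Complex.sq_norm, Complex.normSq_apply, Complex.sub_re, Complex.sub_im,
      Complex.one_re, Complex.one_im] at h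
    linarith
  have hconj : conj u = 1 - u := Complex.ext (by simp [hre]; norm_num) (by simp)
  rw [reflectLine, hconj, sub_mul, one_mul, ← hcP]
  ring

theorem ellipseSet_comm (p q : ℂ) (a : ℝ) : EllipseSet p q a = EllipseSet q p a := by
  ext z
  simp [EllipseSet, add_comm]

theorem IsEllipse.exists_eq_ellipseSet {E : Set ℂ} {f₁ f₂ c : ℂ} {a : ℝ}
    (hE : IsEllipse E f₁ f₂ a) (hc : f₁ = c ∨ f₂ = c) :
    ∃ F, dist c F < 2 * a ∧ E = EllipseSet c F a := by
  obtain ⟨hlt, rfl⟩ := hE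
  rcases hc with rfl | rfl
  · exact ⟨f₂, hlt, rfl⟩
  · exact ⟨f₁, by rwa [dist_comm], ellipseSet_comm _ _ _⟩

theorem le_dist_add_dist_of_inter_eq_singleton {p q P Q ζ z : ℂ} {a : ℝ} (hPQ : P ≠ Q)
    (hE : EllipseSet p q a ∩ LineThrough P Q = {ζ}) (hz : z ∈ LineThrough P Q) :
    2 * a ≤ dist z p + dist z q := by
  obtain ⟨θ₀, rfl⟩ := hz
  set φ := fun θ : ℝ => dist (P + θ • (Q - P)) p + dist (P + θ • (Q - P)) q
  by_contra! hlt
  -- The sum of focal distances tends to infinity in both directions along the line, so by the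
  -- intermediate value theorem the line would meet the ellipse on either side of `θ₀`.
  have hφ : Continuous φ := by fun_prop
  have hφ_lim := tendsto_dist_add_dist_add_smul (sub_ne_zero.2 hPQ.symm) P p q
  obtain ⟨θ₁, hθ₁, h₁⟩ := isPreconnected_Ici.intermediate_value_Ici self_mem_Ici
    (le_principal_iff.2 (Ici_mem_atTop θ₀)) hφ.continuousOn
    (hφ_lim.mono_left atTop_le_cocompact) hlt.le
  obtain ⟨θ₂, hθ₂, h₂⟩ := isPreconnected_Iic.intermediate_value_Ici self_mem_Iic
    (le_principal_iff.2 (Iic_mem_atBot θ₀)) hφ.continuousOn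
    (hφ_lim.mono_left atBot_le_cocompact) hlt.le
  have hζ : ∀ θ, φ θ = 2 * a → P + θ • (Q - P) = ζ := fun θ hθ => hE.subset ⟨hθ, θ, rfl⟩
  have h₁₂ : θ₁ = θ₂ := smul_left_injective ℝ (sub_ne_zero.2 hPQ.symm)
    (add_left_cancel ((hζ θ₁ h₁).trans (hζ θ₂ h₂).symm))
  have h₁₀ : θ₁ = θ₀ := le_antisymm (h₁₂ ▸ hθ₂) hθ₁
  exact hlt.ne (h₁₀ ▸ h₁)

/-- The foci lie on the same side of the tangent line, so the segment from the mirror image `p'`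
of `p` to `q` crosses the line at some `w`, giving `|p'q| = |wp| + |wq| ≥ 2a`; the triangle
inequality through the point of tangency gives the reverse. -/
theorem dist_reflectLine_eq_of_inter_eq_singleton {p q P Q ζ : ℂ} {a : ℝ} (hPQ : P ≠ Q)
    (hpq : dist p q < 2 * a) (hE : EllipseSet p q a ∩ LineThrough P Q = {ζ}) :
    dist (reflectLine P Q p) q = 2 * a := by
  have hmin := fun z => le_dist_add_dist_of_inter_eq_singleton (z := z) hPQ hE
  obtain ⟨hζE, hζL⟩ : ζ ∈ EllipseSet p q a ∩ LineThrough P Q := hE ▸ rfl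
  have hsame : 0 ≤ lineHeight P Q p * lineHeight P Q q := by
    by_contra! h
    obtain ⟨w, hw, hwL⟩ := exists_mem_segment_mem_lineThrough hPQ h.le
    have := hmin w hwL
    rw [dist_comm w p, dist_add_dist_of_mem_segment hw] at this
    linarith
  have hopp : lineHeight P Q (reflectLine P Q p) * lineHeight P Q q ≤ 0 := by
    rw [lineHeight_reflectLine hPQ, neg_mul]
    exact neg_nonpos.2 hsame
  obtain ⟨w, hw, hwL⟩ := exists_mem_segment_mem_lineThrough hPQ hopp
  apply le_antisymm
  · calc dist (reflectLine P Q p) q ≤ dist (reflectLine P Q p) ζ + dist ζ q := dist_triangle _ _ _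
      _ = 2 * a := by rw [dist_comm, dist_reflectLine_of_mem hPQ hζL]; exact hζE
  · calc 2 * a ≤ dist w p + dist w q := hmin w hwL
      _ = dist (reflectLine P Q p) q := by
        rw [← dist_reflectLine_of_mem hPQ hwL, dist_comm, dist_add_dist_of_mem_segment hw]

theorem dist_add_sub_eq_of_tangentToSide {P Q c F : ℂ} {a : ℝ} (hPQ : P ≠ Q)
    (hc : dist c P = dist c Q) (hF : dist c F < 2 * a)
    (h : TangentToSide (EllipseSet c F a) P Q) : dist (P + Q - c) F = 2 * a := by
  obtain ⟨ζ, -, hζ⟩ := h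
  rw [← reflectLine_eq_of_dist_eq hPQ hc]
  exact dist_reflectLine_eq_of_inter_eq_singleton hPQ hF hζ

theorem IsConvexQuad.not_collinear {A₁ A₂ A₃ A₄ : ℂ} (h : IsConvexQuad A₁ A₂ A₃ A₄) :
    ¬ Collinear ℝ {A₁, A₂, A₃} := by
  obtain ⟨h₁, h₂, h₃, -, -⟩ := h
  intro hcol
  rcases hcol.wbtw_or_wbtw_or_wbtw with h | h | h
  · exact h₂ (segment_subset_convexHull (by simp) (by simp) h.mem_segment)
  · exact h₃ (segment_subset_convexHull (by simp) (by simp) h.mem_segment)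
  · exact h₁ (segment_subset_convexHull (by simp) (by simp) h.mem_segment)

theorem IsConvexQuad.ne₁₂_ne₂₃_ne₃₄ {A₁ A₂ A₃ A₄ : ℂ} (h : IsConvexQuad A₁ A₂ A₃ A₄) :
    A₁ ≠ A₂ ∧ A₂ ≠ A₃ ∧ A₃ ≠ A₄ := by
  obtain ⟨h₁, h₂, h₃, -, -⟩ := h
  refine ⟨?_, ?_, ?_⟩ <;> rintro rfl
  · exact h₁ (subset_convexHull ℝ _ (by simp))
  · exact h₂ (subset_convexHull ℝ _ (by simp))
  · exact h₃ (subset_convexHull ℝ _ (by simp))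

theorem InscribedInQuad.dist_add_sub_eq {A₁ A₂ A₃ A₄ c F : ℂ} {a : ℝ}
    (h : InscribedInQuad (EllipseSet c F a) A₁ A₂ A₃ A₄) (hconv : IsConvexQuad A₁ A₂ A₃ A₄)
    (hc : IsCircCenter c A₁ A₂ A₃ A₄) (hF : dist c F < 2 * a) :
    dist (A₁ + A₂ - c) F = 2 * a ∧ dist (A₂ + A₃ - c) F = 2 * a ∧
      dist (A₃ + A₄ - c) F = 2 * a := by
  obtain ⟨h₁₂, h₂₃, h₃₄⟩ := hconv.ne₁₂_ne₂₃_ne₃₄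
  exact ⟨dist_add_sub_eq_of_tangentToSide h₁₂ hc.1 hF h.1,
    dist_add_sub_eq_of_tangentToSide h₂₃ hc.2.1 hF h.2.1,
    dist_add_sub_eq_of_tangentToSide h₃₄ hc.2.2 hF h.2.2.1⟩

theorem besant_ellipse_unique_general
    (A₁ A₂ A₃ A₄ EP : ℂ)
    (hconv : IsConvexQuad A₁ A₂ A₃ A₄)
    (hEP : IsCircCenter EP A₁ A₂ A₃ A₄)
    (E₁ E₂ : Set ℂ) (f₁ f₂ g₁ g₂ : ℂ) (a b : ℝ)
    (hE₁ : IsEllipse E₁ f₁ f₂ a)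
    (hins₁ : InscribedInQuad E₁ A₁ A₂ A₃ A₄) (hfoc₁ : f₁ = EP ∨ f₂ = EP)
    (hE₂ : IsEllipse E₂ g₁ g₂ b)
    (hins₂ : InscribedInQuad E₂ A₁ A₂ A₃ A₄) (hfoc₂ : g₁ = EP ∨ g₂ = EP) :
    E₁ = E₂ := by
  obtain ⟨F, hF, rfl⟩ := hE₁.exists_eq_ellipseSet hfoc₁
  obtain ⟨G, hG, rfl⟩ := hE₂.exists_eq_ellipseSet hfoc₂
  obtain ⟨hF₁, hF₂, hF₃⟩ := hins₁.dist_add_sub_eq hconv hEP hF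
  obtain ⟨hG₁, hG₂, hG₃⟩ := hins₂.dist_add_sub_eq hconv hEP hG
  have hdiag := linearIndependent_diagonals_of_not_collinear hconv.not_collinear hconv.2.2.2.2
  rw [show A₃ - A₁ = (A₂ + A₃ - EP) - (A₁ + A₂ - EP) by ring,
    show A₄ - A₂ = (A₃ + A₄ - EP) - (A₂ + A₃ - EP) by ring] at hdiag
  obtain rfl : F = G := eq_of_dist_eq_of_linearIndependent Complex.finrank_real_complex hdiag
    hF₁ hF₂ hF₃ hG₁ hG₂ hG₃
  obtain rfl : a = b := by linarith [hF₁.symm.trans hG₁]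
  rfl

/-- The Besant ellipse of a Besant quadrilateral is unique: two
non-circular ellipses inscribed in a cyclic convex quadrilateral (not a parallelogram),
each having a focus at the circumcenter `EP`, coincide. -/
theorem besant_ellipse_unique
    (A₁ A₂ A₃ A₄ EP : ℂ)
    (hconv : IsConvexQuad A₁ A₂ A₃ A₄)
    (hEP : IsCircCenter EP A₁ A₂ A₃ A₄)
    (hnp : ¬ IsParallelogram A₁ A₂ A₃ A₄)
    (E₁ E₂ : Set ℂ) (f₁ f₂ g₁ g₂ : ℂ) (a b : ℝ)
    (hE₁ : IsEllipse E₁ f₁ f₂ a) (hnc₁ : f₁ ≠ f₂)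
    (hins₁ : InscribedInQuad E₁ A₁ A₂ A₃ A₄) (hfoc₁ : f₁ = EP ∨ f₂ = EP)
    (hE₂ : IsEllipse E₂ g₁ g₂ b) (hnc₂ : g₁ ≠ g₂)
    (hins₂ : InscribedInQuad E₂ A₁ A₂ A₃ A₄) (hfoc₂ : g₁ = EP ∨ g₂ = EP) :
    E₁ = E₂ :=
  besant_ellipse_unique_general A₁ A₂ A₃ A₄ EP hconv hEP E₁ E₂ f₁ f₂ g₁ g₂ a b hE₁ hins₁ hfoc₁ hE₂
    hins₂ hfoc₂
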